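/- Define the Santos polynomials S_n = Σ_{0 ≤ 2k ≤ n} q^{2k²} [n choose 2k]_q. Then for all n ≥ 0, S_{n+2} − (1+q) S_{n+1} + (q − q^{2n+2}) S_n = 0. -/
import Mathlib

open LaurentPolynomial

/-- The Gaussian (q-)binomial coefficient `[n choose k]_q`, as a Laurent polynomial in `q`,
with the convention that it vanishes for `k < 0` or `k > n`.  Defined via the standard
Pascal-type recurrence `[n+1, k] = q^k [n, k] + [n, k-1]`. -/
noncomputable def qb : ℕ → ℤ → LaurentPolynomial ℤ
  | 0, k => if k = 0 then 1 else 0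
  | (n+1), k => T k * qb n k + qb n (k-1)

/-- The variable `q`. -/
noncomputable def q : LaurentPolynomial ℤ := T 1

/-- The Santos polynomials `S n = Σ_{0 ≤ 2k ≤ n} q^{2k²} [n choose 2k]_q`. -/
noncomputable def S (n : ℕ) : LaurentPolynomial ℤ :=
  ∑ k ∈ Finset.range (n / 2 + 1), q ^ (2 * k ^ 2) * qb n (2 * k)

lemma q_pow (a : ℕ) : q ^ a = T (a : ℤ) := by
  simp [q, T_pow]

lemma qb_neg : ∀ (n : ℕ) (k : ℤ), k < 0 → qb n k = 0
  | 0, k, h => by simp [qb]; omega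
  | (n+1), k, h => by
      rw [qb, qb_neg n k h, qb_neg n (k-1) (by omega)]; ring

lemma qb_gt : ∀ (n : ℕ) (k : ℤ), (n : ℤ) < k → qb n k = 0
  | 0, k, h => by simp [qb]; omega
  | (n+1), k, h => by
      push_cast at h
      rw [qb, qb_gt n k (by omega), qb_gt n (k-1) (by omega)]; ring

lemma qb_succ (n : ℕ) (k : ℤ) : qb (n+1) k = T k * qb n k + qb n (k-1) := by
  rw [qb]

lemma pascal2 : ∀ (n : ℕ) (k : ℤ), qb (n+1) k = qb n k + T ((n:ℤ)+1-k) * qb n (k-1)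
  | 0, k => by
      rcases eq_or_ne k 0 with rfl | hk
      · simp [qb]
      rcases eq_or_ne k 1 with rfl | hk1
      · simp [qb]
      · simp [qb, hk, hk1, sub_eq_zero]
  | (n+1), k => by
      conv_rhs => rw [qb_succ n k, qb_succ n (k-1)]
      rw [qb_succ (n+1) k, pascal2 n k, pascal2 n (k-1)]
      push_cast
      simp only [mul_add, add_mul, ← mul_assoc, ← T_add]
      rw [show (k:ℤ) + ((n:ℤ)+1-k) = ((n:ℤ)+1+1-k) + (k-1) by ring]
      ring_nf


lemma S_eq (n N : ℕ) (h : n / 2 + 1 ≤ N) :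
    S n = ∑ k ∈ Finset.range N, q ^ (2 * k ^ 2) * qb n (2 * k) := by
  rw [S]
  apply Finset.sum_subset (Finset.range_subset_range.mpr h)
  intro k _ hk
  simp only [Finset.mem_range, not_lt] at hk
  rw [qb_gt n (2*k) (by push_cast; omega)]
  ring

noncomputable def U (n : ℕ) : LaurentPolynomial ℤ :=
  ∑ k ∈ Finset.range (n + 1), q ^ (2 * k ^ 2 + 2 * k) * qb n (2 * k + 1)

lemma lemA (n : ℕ) : S (n + 1) = S n + q ^ (n + 1) * U n := by
  rw [S_eq (n+1) (n+2) (by omega), S_eq n (n+2) (by omega), U, Finset.mul_sum]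
  have key : ∀ k ∈ Finset.range (n+2), q ^ (2 * k ^ 2) * qb (n+1) (2 * k) =
      q ^ (2 * k ^ 2) * qb n (2 * k) +
        q ^ (2 * k ^ 2) * T ((n:ℤ) + 1 - 2 * k) * qb n (2 * k - 1) := by
    intro k _
    rw [pascal2 n (2*k)]
    push_cast
    ring
  rw [Finset.sum_congr rfl key, Finset.sum_add_distrib]
  congr 1
  rw [Finset.sum_range_succ']
  have h0 : q ^ (2 * 0 ^ 2) * T ((n:ℤ) + 1 - 2 * 0) * qb n (2 * 0 - 1) = 0 := by
    rw [qb_neg n (2 * 0 - 1) (by omega)]; ring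
  have h0' : q ^ (2 * 0 ^ 2) * T ((n:ℤ) + 1 - 2 * ((0:ℕ):ℤ)) * qb n (2 * ((0:ℕ):ℤ) - 1) = 0 := by
    push_cast; exact h0
  rw [h0', add_zero]
  apply Finset.sum_congr rfl
  intro k _
  rw [q_pow, q_pow, q_pow]
  simp only [← mul_assoc, ← T_add]
  congr 2
  · push_cast; ring
  · push_cast; ring

lemma lemB (n : ℕ) : U (n + 1) = U n + q ^ n * S n := by
  rw [U, U, S_eq n (n+2) (by omega), Finset.mul_sum]
  have key : ∀ k ∈ Finset.range (n+2), q ^ (2 * k ^ 2 + 2 * k) * qb (n+1) (2 * k + 1) =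
      q ^ (2 * k ^ 2 + 2 * k) * qb n (2 * k + 1) +
        q ^ n * (q ^ (2 * k ^ 2) * qb n (2 * k)) := by
    intro k _
    rw [pascal2 n (2*k+1)]
    rw [show (2*(k:ℤ)+1-1) = 2*k by ring]
    rw [mul_add]
    congr 1
    rw [q_pow, q_pow, q_pow]
    simp only [← mul_assoc, ← T_add]
    congr 2
    push_cast
    ring
  rw [Finset.sum_congr rfl key, Finset.sum_add_distrib]
  congr 1
  rw [Finset.sum_range_succ]
  have hz : qb n (2 * ((n+1 : ℕ) : ℤ) + 1) = 0 := qb_gt n _ (by push_cast; omega)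
  rw [hz]
  ring

theorem stmt14 (n : ℕ) :
    S (n + 2) - (1 + q) * S (n + 1) + (q - q ^ (2 * n + 2)) * S n = 0 := by
  have h1 := lemA n
  have h2 := lemA (n+1)
  have h3 := lemB n
  rw [show n+1+1 = n+2 from rfl] at h2
  linear_combination h2 + q ^ (n + 2) * h3 - q * h1
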